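/- arXiv:2005.14563 — 5 statements merged into one kernel-verified Lean document; each statement's English description precedes it below -/
import Mathlib

section
/- Let Z be a Banach space and k > 0 an integer. If Z ≅ Z ⊕ F for every k-dimensional Banach space F (SUFDS_k), then for every k-dimensional subspace F ⊆ Z, Z ≅ Z/F (SUFDQ_k). -/
/-!
A closed complement `W` of `F` is isomorphic to `Z ⧸ F`, while an isomorphism `e : Z ≃ Z × F`
exhibits `Z` as the closed subspace `W' = e⁻¹(Z × 0)` of `Z`, again of codimension `k`.
Closed subspaces `W`, `W'` of equal finite codimension are isomorphic: both contain
`U = W ∩ W'` with finite codimension, `W ≅ U × C` and `W' ≅ U × C'` by the open mapping theorem,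
and `dim C = codim U - codim W = codim U - codim W' = dim C'`.
-/

open Module

/-- A bounded operator between (semi)normed spaces is *Fredholm of index `k`* if it has closed
range, finite-dimensional kernel and finite-dimensional cokernel, with
`dim ker - dim coker = k`. -/
def IsFredholmOfIndex {V W : Type*} [SeminormedAddCommGroup V] [NormedSpace ℂ V]
    [SeminormedAddCommGroup W] [NormedSpace ℂ W] (T : V →L[ℂ] W) (k : ℤ) : Prop :=
  IsClosed (LinearMap.range (T : V →ₗ[ℂ] W) : Set W) ∧ FiniteDimensional ℂ (LinearMap.ker (T : V →ₗ[ℂ] W)) ∧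
    FiniteDimensional ℂ (W ⧸ LinearMap.range (T : V →ₗ[ℂ] W)) ∧
    (finrank ℂ (LinearMap.ker (T : V →ₗ[ℂ] W)) : ℤ) - finrank ℂ (W ⧸ LinearMap.range (T : V →ₗ[ℂ] W)) = k

theorem exists_disjoint_sup_eq_of_le {α : Type*} [Lattice α] [BoundedOrder α] [IsModularLattice α]
    [ComplementedLattice α] {a b : α} (h : a ≤ b) : ∃ c, Disjoint a c ∧ a ⊔ c = b := by
  obtain ⟨c, hc⟩ := exists_isCompl a
  exact ⟨c ⊓ b, hc.disjoint.mono_right inf_le_left,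
    by rw [← sup_inf_assoc_of_le c h, hc.sup_eq_top, top_inf_eq]⟩

namespace Submodule

section DivisionRing

variable {K V : Type*} [DivisionRing K] [AddCommGroup V] [Module K V]

theorem finrank_quotient_eq_finrank_add_finrank_quotient {U C W : Submodule K V}
    (hUC : Disjoint U C) (hW : U ⊔ C = W) [FiniteDimensional K (V ⧸ U)] [FiniteDimensional K C] :
    finrank K (V ⧸ U) = finrank K C + finrank K (V ⧸ W) := by
  obtain ⟨G, hWG⟩ := W.exists_isCompl
  have hU : IsCompl U (C ⊔ G) := hUC.isCompl_sup_right_of_isCompl_sup_left (hW ▸ hWG)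
  have hCG : Disjoint C G := hWG.disjoint.mono_left (hW ▸ le_sup_right)
  have := (quotientEquivOfIsCompl U (C ⊔ G) hU).finiteDimensional
  have : FiniteDimensional K G := finiteDimensional_of_le (le_sup_right : G ≤ C ⊔ G)
  calc finrank K (V ⧸ U) = finrank K ↥(C ⊔ G) := (quotientEquivOfIsCompl U _ hU).finrank_eq
    _ = finrank K C + finrank K G := by
      have := finrank_sup_add_finrank_inf_eq C G
      rwa [hCG.eq_bot, finrank_bot, add_zero] at this
    _ = finrank K C + finrank K (V ⧸ W) := by rw [(quotientEquivOfIsCompl W G hWG).finrank_eq]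

end DivisionRing

variable {𝕜 E : Type*} [NontriviallyNormedField 𝕜] [CompleteSpace 𝕜]
  [NormedAddCommGroup E] [NormedSpace 𝕜 E] [CompleteSpace E]

noncomputable def prodEquivSupOfDisjoint {U C : Submodule 𝕜 E} (hU : IsClosed (U : Set E))
    [FiniteDimensional 𝕜 C] (h : Disjoint U C) : (U × C) ≃L[𝕜] ↥(U ⊔ C) :=
  have hker : LinearMap.ker (U.subtypeL.coprod C.subtypeL : U × C →ₗ[𝕜] E) = ⊥ := by
    rw [ContinuousLinearMap.ker_coprod_of_disjoint_range (by simpa)]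
    simp
  have hrange : LinearMap.range (U.subtypeL.coprod C.subtypeL : U × C →ₗ[𝕜] E) = U ⊔ C := by
    simp [LinearMap.range_coprod]
  have : CompleteSpace U := hU.completeSpace_coe
  have : CompleteSpace C := FiniteDimensional.complete 𝕜 C
  have hclosed : IsClosed (Set.range (U.subtypeL.coprod C.subtypeL)) := by
    have := isClosed_sup_finiteDimensional U C hU
    rwa [← hrange, LinearMap.coe_range] at this
  (ContinuousLinearMap.equivRange (LinearMap.ker_eq_bot.mp hker) hclosed).trans
    (ContinuousLinearEquiv.ofEq _ _ hrange)

theorem nonempty_equiv_prod_fin_of_le {U W : Submodule 𝕜 E} (hU : IsClosed (U : Set E))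
    [FiniteDimensional 𝕜 (E ⧸ U)] (hUW : U ≤ W) :
    Nonempty (W ≃L[𝕜] U × (Fin (finrank 𝕜 (E ⧸ U) - finrank 𝕜 (E ⧸ W)) → 𝕜)) := by
  obtain ⟨C, hUC, rfl⟩ := exists_disjoint_sup_eq_of_le hUW
  have : FiniteDimensional 𝕜 C := Module.Finite.iff_fg.mpr (CoFG.fg_of_disjoint hUC.symm ‹_›)
  have hdim := finrank_quotient_eq_finrank_add_finrank_quotient hUC rfl
  have eC : C ≃L[𝕜] (Fin (finrank 𝕜 (E ⧸ U) - finrank 𝕜 (E ⧸ (U ⊔ C))) → 𝕜) :=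
    (LinearEquiv.ofFinrankEq _ _ (by rw [finrank_fin_fun]; omega)).toContinuousLinearEquiv
  exact ⟨(prodEquivSupOfDisjoint hU hUC).symm.trans ((ContinuousLinearEquiv.refl 𝕜 U).prodCongr eC)⟩

theorem nonempty_equiv_of_finrank_quotient_eq {W W' : Submodule 𝕜 E}
    (hW : IsClosed (W : Set E)) (hW' : IsClosed (W' : Set E))
    [FiniteDimensional 𝕜 (E ⧸ W)] [FiniteDimensional 𝕜 (E ⧸ W')]
    (h : finrank 𝕜 (E ⧸ W) = finrank 𝕜 (E ⧸ W')) : Nonempty (W ≃L[𝕜] W') := by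
  have : FiniteDimensional 𝕜 (E ⧸ W ⊓ W') := CoFG.inf ‹_› ‹_›
  obtain ⟨e⟩ := nonempty_equiv_prod_fin_of_le (hW.inter hW') (inf_le_left : W ⊓ W' ≤ W)
  obtain ⟨e'⟩ := nonempty_equiv_prod_fin_of_le (hW.inter hW') (inf_le_right : W ⊓ W' ≤ W')
  rw [h] at e
  exact ⟨e.trans e'.symm⟩

end Submodule

theorem LinearEquiv.range_symm_comp_inl {R M X Y : Type*} [Semiring R] [AddCommMonoid M]
    [AddCommMonoid X] [AddCommMonoid Y] [Module R M] [Module R X] [Module R Y]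
    (e : M ≃ₗ[R] X × Y) :
    LinearMap.range (e.symm.toLinearMap ∘ₗ LinearMap.inl R X Y) =
      LinearMap.ker (LinearMap.snd R X Y ∘ₗ e.toLinearMap) := by
  rw [LinearMap.range_comp, LinearMap.range_inl, LinearMap.ker_comp,
    Submodule.map_equiv_eq_comap_symm, LinearEquiv.symm_symm]

theorem ContinuousLinearEquiv.exists_submodule_equiv_fst {𝕜 E X Y : Type*}
    [NontriviallyNormedField 𝕜] [NormedAddCommGroup E] [NormedSpace 𝕜 E] [CompleteSpace E]
    [NormedAddCommGroup X] [NormedSpace 𝕜 X] [CompleteSpace X]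
    [NormedAddCommGroup Y] [NormedSpace 𝕜 Y] (e : E ≃L[𝕜] X × Y) :
    ∃ W : Submodule 𝕜 E, IsClosed (W : Set E) ∧ Nonempty (X ≃L[𝕜] W) ∧
      Nonempty ((E ⧸ W) ≃ₗ[𝕜] Y) := by
  let f : X →L[𝕜] E := e.symm ∘L .inl 𝕜 X Y
  let g : E →L[𝕜] Y := .snd 𝕜 X Y ∘L e
  have hfg : LinearMap.range (f : X →ₗ[𝕜] E) = LinearMap.ker (g : E →ₗ[𝕜] Y) :=
    e.toLinearEquiv.range_symm_comp_inl
  have hf : Function.Injective f := e.symm.injective.comp LinearMap.inl_injective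
  have hg : Function.Surjective g := Prod.snd_surjective.comp e.surjective
  have hclosed : IsClosed (Set.range f) := by
    have := g.isClosed_ker
    rwa [← hfg, LinearMap.coe_range] at this
  exact ⟨LinearMap.ker (g : E →ₗ[𝕜] Y), g.isClosed_ker,
    ⟨(ContinuousLinearMap.equivRange hf hclosed).trans (.ofEq _ _ hfg)⟩,
    ⟨(g : E →ₗ[𝕜] Y).quotKerEquivOfSurjective hg⟩⟩

/-- If a Banach space `Z` is SUFDS_k (isomorphic to `Z ⊕ F` for every
`k`-dimensional Banach space `F`), then `Z` is SUFDQ_k (isomorphic to `Z/F` for every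
`k`-dimensional subspace `F ⊆ Z`). -/
theorem sufds_imp_sufdq (Z : Type u) [NormedAddCommGroup Z] [NormedSpace ℂ Z] [CompleteSpace Z]
    (k : ℕ) (hk : 0 < k)
    (hSUFDS : ∀ (F : Type u) [NormedAddCommGroup F] [NormedSpace ℂ F] [CompleteSpace F]
      [FiniteDimensional ℂ F], finrank ℂ F = k → Nonempty (Z ≃L[ℂ] (Z × F)))
    (F : Submodule ℂ Z) (hF : finrank ℂ F = k) :
    Nonempty (Z ≃L[ℂ] (Z ⧸ F)) := by
  have : FiniteDimensional ℂ F := .of_finrank_pos (hF ▸ hk)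
  obtain ⟨e⟩ := hSUFDS F hF
  obtain ⟨W', hW', ⟨eZW'⟩, ⟨eW'F⟩⟩ := e.exists_submodule_equiv_fst
  obtain ⟨W, hFW⟩ := (Submodule.ClosedComplemented.of_finiteDimensional F).exists_isTopCompl
  have eWF := Submodule.quotientEquivOfIsTopCompl W F hFW.symm
  have : FiniteDimensional ℂ (Z ⧸ W) := eWF.symm.finiteDimensional
  have : FiniteDimensional ℂ (Z ⧸ W') := eW'F.symm.finiteDimensional
  obtain ⟨eW'W⟩ := Submodule.nonempty_equiv_of_finrank_quotient_eq hW' hFW.isClosed'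
    (by rw [eW'F.finrank_eq, eWF.toLinearEquiv.finrank_eq])
  exact ⟨eZW'.trans (eW'W.trans (Submodule.quotientEquivOfIsTopCompl F W hFW).symm)⟩
end

section
/- Let Z be a Banach space and k > 0 an integer. Z is isomorphic to Z ⊕ F for every k-dimensional Banach space F if and only if there exists a Fredholm operator in B(Z) of index k. -/
/-!
If `Z ≅ Z ⊕ F`, the projection of `Z ⊕ F` onto `Z` is a surjection with kernel `F`, so it gives
an operator on `Z` of index `dim F`. Conversely, a Fredholm operator `T` of index `k` yields
splittings `Z = X₁ ⊕ ker T` and `Z = range T ⊕ Y₀` in which `T : X₁ ≅ range T` (open mapping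
theorem). As `dim ker T = dim Y₀ + k`, we get `Z ≅ X₁ ⊕ Y₀ ⊕ F ≅ range T ⊕ Y₀ ⊕ F ≅ Z ⊕ F`.
-/

open Module

theorem isFredholmOfIndex_fst_comp {V W F : Type*} [SeminormedAddCommGroup V] [NormedSpace ℂ V]
    [SeminormedAddCommGroup W] [NormedSpace ℂ W] [SeminormedAddCommGroup F] [NormedSpace ℂ F]
    [FiniteDimensional ℂ F] (e : V ≃L[ℂ] W × F) :
    IsFredholmOfIndex ((ContinuousLinearMap.fst ℂ W F).comp (e : V →L[ℂ] W × F)) (finrank ℂ F) := by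
  set T := (ContinuousLinearMap.fst ℂ W F).comp (e : V →L[ℂ] W × F)
  have hrange : (T : V →ₗ[ℂ] W).range = ⊤ :=
    LinearMap.range_eq_top.2 (Prod.fst_surjective.comp e.surjective)
  have hker : (T : V →ₗ[ℂ] W).ker =
      (LinearMap.inr ℂ W F).range.comap e.toLinearEquiv.toLinearMap := by
    rw [← LinearMap.ker_fst]
    rfl
  rw [Submodule.comap_equiv_eq_map_symm] at hker
  have : FiniteDimensional ℂ (T : V →ₗ[ℂ] W).ker := by
    rw [hker]; infer_instance
  refine ⟨by simp [hrange], this, by rw [hrange]; infer_instance, ?_⟩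
  rw [hker, LinearEquiv.finrank_map_eq, LinearMap.finrank_range_of_inj LinearMap.inr_injective,
    hrange, finrank_zero_of_subsingleton (M := W ⧸ (⊤ : Submodule ℂ W))]
  simp

namespace ContinuousLinearMap.FredholmPackage

variable {𝕜 E F : Type*} [NontriviallyNormedField 𝕜]
  [AddCommGroup E] [Module 𝕜 E] [TopologicalSpace E]
  [AddCommGroup F] [Module 𝕜 F] [TopologicalSpace F] {u : E →L[𝕜] F}

theorem finrank_decCodom_X₀ (pkg : FredholmPackage u) :
    finrank 𝕜 pkg.decCodom.X₀ = finrank 𝕜 (F ⧸ u.range) :=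
  (Submodule.quotientEquivOfIsCompl _ _
    (pkg.range_eq ▸ pkg.decCodom.isTopCompl.isCompl)).finrank_eq.symm

theorem nonempty_equiv_prod [CompleteSpace 𝕜] [IsTopologicalAddGroup E] [ContinuousSMul 𝕜 E]
    [T2Space E] [IsTopologicalAddGroup F] [ContinuousSMul 𝕜 F] [T2Space F]
    (pkg : FredholmPackage u) (G : Type*) [AddCommGroup G] [Module 𝕜 G] [TopologicalSpace G]
    [IsTopologicalAddGroup G] [ContinuousSMul 𝕜 G] [T2Space G] [FiniteDimensional 𝕜 G]
    (h : finrank 𝕜 pkg.decDom.X₀ = finrank 𝕜 pkg.decCodom.X₀ + finrank 𝕜 G) :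
    Nonempty (E ≃L[𝕜] F × G) := by
  have := pkg.decDom.finite_X₀
  have := pkg.decCodom.finite_X₀
  let eDom := Submodule.prodEquivOfIsTopCompl _ _ pkg.decDom.isTopCompl
  let eCodom := Submodule.prodEquivOfIsTopCompl _ _ pkg.decCodom.isTopCompl
  let e₀ : pkg.decDom.X₀ ≃L[𝕜] pkg.decCodom.X₀ × G :=
    (LinearEquiv.ofFinrankEq _ _ (by rw [finrank_prod, h])).toContinuousLinearEquiv
  exact ⟨eDom.symm.trans <| ((ContinuousLinearEquiv.refl 𝕜 _).prodCongr e₀).trans <|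
    (ContinuousLinearEquiv.prodAssoc 𝕜 _ _ _).symm.trans <|
      ((pkg.equiv.prodCongr (.refl 𝕜 _)).trans eCodom).prodCongr (.refl 𝕜 G)⟩

end ContinuousLinearMap.FredholmPackage

section Banach

variable {V W : Type*} [NormedAddCommGroup V] [NormedSpace ℂ V] [CompleteSpace V]
  [NormedAddCommGroup W] [NormedSpace ℂ W] [CompleteSpace W]

theorem ContinuousLinearMap.isStrictMap_of_isClosed_range {T : V →L[ℂ] W}
    (hT : IsClosed (T.range : Set W)) : Topology.IsStrictMap T := by
  have : CompleteSpace T.range := hT.completeSpace_coe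
  have hsurj : Function.Surjective T.rangeRestrict := LinearMap.surjective_rangeRestrict _
  exact (LinearMap.isStrictMap_iff_isOpenQuotientMap_rangeRestrict (f := (T : V →ₗ[ℂ] W))).2
    ⟨hsurj, T.rangeRestrict.continuous, T.rangeRestrict.isOpenMap hsurj⟩

theorem IsFredholmOfIndex.isFredholm {T : V →L[ℂ] W} {k : ℤ} (hT : IsFredholmOfIndex T k) :
    T.IsFredholm :=
  have := hT.2.1
  ⟨T.isStrictMap_of_isClosed_range hT.1, hT.1, hT.2.1, hT.2.2.1,
    .of_finiteDimensional _⟩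

theorem IsFredholmOfIndex.nonempty_equiv_prod {T : V →L[ℂ] W} (G : Type*) [NormedAddCommGroup G]
    [NormedSpace ℂ G] [FiniteDimensional ℂ G] (hT : IsFredholmOfIndex T (finrank ℂ G)) :
    Nonempty (V ≃L[ℂ] W × G) := by
  obtain ⟨pkg⟩ := hT.isFredholm.nonempty_fredholmPackage
  refine pkg.nonempty_equiv_prod G ?_
  have hindex := hT.2.2.2
  rw [← pkg.ker_eq, pkg.finrank_decCodom_X₀]
  omega

end Banach

theorem sufds_iff_exists_fredholm_general (Z : Type u) [NormedAddCommGroup Z] [NormedSpace ℂ Z]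
    [CompleteSpace Z] (k : ℕ) :
    (∀ (F : Type u) [NormedAddCommGroup F] [NormedSpace ℂ F] [CompleteSpace F]
      [FiniteDimensional ℂ F], finrank ℂ F = k → Nonempty (Z ≃L[ℂ] (Z × F)))
    ↔ ∃ T : Z →L[ℂ] Z, IsFredholmOfIndex T (k : ℤ) := by
  constructor
  · intro h
    obtain ⟨e⟩ := h (ULift (Fin k → ℂ)) (by simp)
    exact ⟨_, by simpa using isFredholmOfIndex_fst_comp e⟩
  · rintro ⟨T, hT⟩ F _ _ _ _ rfl
    exact hT.nonempty_equiv_prod F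

/-- A Banach space `Z` is isomorphic to `Z ⊕ F` for every `k`-dimensional Banach
space `F` if and only if there exists a Fredholm operator on `Z` of index `k`. -/
theorem sufds_iff_exists_fredholm (Z : Type u) [NormedAddCommGroup Z] [NormedSpace ℂ Z]
    [CompleteSpace Z] (k : ℕ) (hk : 0 < k) :
    (∀ (F : Type u) [NormedAddCommGroup F] [NormedSpace ℂ F] [CompleteSpace F]
      [FiniteDimensional ℂ F], finrank ℂ F = k → Nonempty (Z ≃L[ℂ] (Z × F)))
    ↔ ∃ T : Z →L[ℂ] Z, IsFredholmOfIndex T (k : ℤ) :=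
  sufds_iff_exists_fredholm_general Z k
end

section
/- Let V be a Banach space and Z₁, Z₂ finite-dimensional Banach spaces with dim Z₂ ≥ dim Z₁. If B(V) contains a surjective Fredholm operator of index dim Z₂ − dim Z₁, then V ⊕ Z₁ is isomorphic to V ⊕ Z₂. -/
/-!
Choose a continuous projection `p` of `V` onto the finite-dimensional kernel `K` of `F`. Since `F`
is onto, `x ↦ (F x, p x)` is a continuous bijection `V → V × K`, hence an isomorphism by the open
mapping theorem. The cokernel of `F` vanishes, so the index condition reads
`dim K + dim Z₁ = dim Z₂`, whence `V × Z₁ ≅ V × K × Z₁ ≅ V × Z₂`.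
-/

open Module

theorem IsFredholmOfIndex.finrank_ker_of_surjective {V W : Type*} [SeminormedAddCommGroup V]
    [NormedSpace ℂ V] [SeminormedAddCommGroup W] [NormedSpace ℂ W] {T : V →L[ℂ] W} {k : ℤ}
    (hT : IsFredholmOfIndex T k) (hsurj : Function.Surjective T) :
    (finrank ℂ (LinearMap.ker (T : V →ₗ[ℂ] W)) : ℤ) = k := by
  obtain ⟨-, -, -, hidx⟩ := hT
  rwa [LinearMap.range_eq_top.mpr hsurj, finrank_zero_of_subsingleton (M := W ⧸ ⊤),
    Nat.cast_zero, sub_zero] at hidx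

theorem ContinuousLinearMap.nonempty_equiv_prod_ker_of_surjective {𝕜 E F : Type*} [RCLike 𝕜]
    [NormedAddCommGroup E] [NormedSpace 𝕜 E] [CompleteSpace E]
    [NormedAddCommGroup F] [NormedSpace 𝕜 F] [CompleteSpace F]
    (f : E →L[𝕜] F) (hf : Function.Surjective f) [FiniteDimensional 𝕜 f.ker] :
    Nonempty (E ≃L[𝕜] F × f.ker) :=
  have ⟨p, hp⟩ := Submodule.ClosedComplemented.of_finiteDimensional (𝕜 := 𝕜) f.ker
  ⟨f.equivProdOfSurjectiveOfIsCompl p (LinearMap.range_eq_top.mpr hf)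
    (LinearMap.range_eq_of_proj hp) (LinearMap.isCompl_of_proj hp)⟩

def ContinuousLinearEquiv.prodAbsorb {R V W K Z₁ Z₂ : Type*} [Semiring R]
    [AddCommMonoid V] [Module R V] [TopologicalSpace V]
    [AddCommMonoid W] [Module R W] [TopologicalSpace W]
    [AddCommMonoid K] [Module R K] [TopologicalSpace K]
    [AddCommMonoid Z₁] [Module R Z₁] [TopologicalSpace Z₁]
    [AddCommMonoid Z₂] [Module R Z₂] [TopologicalSpace Z₂]
    (e : V ≃L[R] W × K) (e' : (K × Z₁) ≃L[R] Z₂) : (V × Z₁) ≃L[R] W × Z₂ :=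
  (e.prodCongr (.refl R Z₁)).trans <|
    (ContinuousLinearEquiv.prodAssoc R W K Z₁).trans ((ContinuousLinearEquiv.refl R W).prodCongr e')

theorem iso_of_surjective_fredholm_general (V : Type u) [NormedAddCommGroup V] [NormedSpace ℂ V]
    [CompleteSpace V]
    (Z₁ : Type u) [NormedAddCommGroup Z₁] [NormedSpace ℂ Z₁] [FiniteDimensional ℂ Z₁]
    (Z₂ : Type u) [NormedAddCommGroup Z₂] [NormedSpace ℂ Z₂] [FiniteDimensional ℂ Z₂]
    (F : V →L[ℂ] V) (hsurj : Function.Surjective F)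
    (hF : IsFredholmOfIndex F ((finrank ℂ Z₂ : ℤ) - finrank ℂ Z₁)) :
    Nonempty ((V × Z₁) ≃L[ℂ] (V × Z₂)) := by
  have : FiniteDimensional ℂ F.ker := hF.2.1
  have hK := hF.finrank_ker_of_surjective hsurj
  obtain ⟨e⟩ := F.nonempty_equiv_prod_ker_of_surjective hsurj
  have hdim : finrank ℂ (F.ker × Z₁) = finrank ℂ Z₂ := by
    rw [finrank_prod]
    omega
  exact ⟨e.prodAbsorb (.ofFinrankEq hdim)⟩

/-- If `dim Z₂ ≥ dim Z₁` and `B(V)` contains a surjective Fredholm operator of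
index `dim Z₂ - dim Z₁`, then `V ⊕ Z₁ ≅ V ⊕ Z₂`. -/
theorem iso_of_surjective_fredholm (V : Type u) [NormedAddCommGroup V] [NormedSpace ℂ V]
    [CompleteSpace V]
    (Z₁ : Type u) [NormedAddCommGroup Z₁] [NormedSpace ℂ Z₁] [FiniteDimensional ℂ Z₁]
    (Z₂ : Type u) [NormedAddCommGroup Z₂] [NormedSpace ℂ Z₂] [FiniteDimensional ℂ Z₂]
    (hdim : finrank ℂ Z₁ ≤ finrank ℂ Z₂)
    (F : V →L[ℂ] V) (hsurj : Function.Surjective F)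
    (hF : IsFredholmOfIndex F ((finrank ℂ Z₂ : ℤ) - finrank ℂ Z₁)) :
    Nonempty ((V × Z₁) ≃L[ℂ] (V × Z₂)) :=
  iso_of_surjective_fredholm_general V Z₁ Z₂ F hsurj hF
end

section
/- Let V and W be Banach spaces, and let K = { I_V − B₁B₂ : B₁ ∈ B(W,V), B₂ ∈ B(V,W) }. Then K = B(V) if and only if V is isomorphic to a complemented subspace of W. Moreover K = B(V) if and only if 0 ∈ K. -/
/-!
`0 ∈ K` says exactly that some `B₂ : V → W` has a left inverse `B₁`; then `B₂` identifies `V`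
with its range, which `B₂ B₁` projects onto. Conversely, once `B₁ B₂ = I_V`, every operator is
in `K`, since `X = I_V - B₁ (B₂ (I_V - X))`.
-/

open Module

/-- The set `K = { I_V - B₁B₂ : B₁ ∈ B(W,V), B₂ ∈ B(V,W) }`. -/
def opSet (V W : Type u) [NormedAddCommGroup V] [NormedSpace ℂ V]
    [NormedAddCommGroup W] [NormedSpace ℂ W] : Set (V →L[ℂ] V) :=
  {X | ∃ (B₁ : W →L[ℂ] V) (B₂ : V →L[ℂ] W), X = ContinuousLinearMap.id ℂ V - B₁.comp B₂}

open Function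

namespace ContinuousLinearMap

variable {R : Type*} [Ring R] {M N : Type*} [TopologicalSpace M] [TopologicalSpace N]
  [AddCommGroup M] [AddCommGroup N] [Module R M] [Module R N]

noncomputable def equivRangeOfLeftInverse (f₁ : M →L[R] N) (f₂ : N →L[R] M)
    (h : LeftInverse f₂ f₁) : M ≃L[R] f₁.range :=
  ContinuousLinearEquiv.equivOfInverse (f₁.codRestrict f₁.range fun x => ⟨x, rfl⟩)
    (f₂ ∘L f₁.range.subtypeL) h (by rintro ⟨_, x, rfl⟩; ext; simp [h x])

theorem exists_leftInverse_iff_exists_closedComplemented_equiv :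
    (∃ (f₁ : M →L[R] N) (f₂ : N →L[R] M), LeftInverse f₂ f₁) ↔
      ∃ P : Submodule R N, P.ClosedComplemented ∧ Nonempty (M ≃L[R] P) := by
  constructor
  · rintro ⟨f₁, f₂, h⟩
    exact ⟨f₁.range, f₁.closedComplemented_range_of_leftInverse f₂ h,
      ⟨f₁.equivRangeOfLeftInverse f₂ h⟩⟩
  · rintro ⟨P, ⟨π, hπ⟩, ⟨e⟩⟩
    exact ⟨P.subtypeL ∘L e, e.symm ∘L π, fun x => by simp [hπ]⟩

end ContinuousLinearMap

section OpSet

variable {V W : Type u} [NormedAddCommGroup V] [NormedSpace ℂ V]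
  [NormedAddCommGroup W] [NormedSpace ℂ W]

theorem zero_mem_opSet_iff :
    (0 : V →L[ℂ] V) ∈ opSet V W ↔
      ∃ (B₂ : V →L[ℂ] W) (B₁ : W →L[ℂ] V), LeftInverse B₁ B₂ := by
  rw [exists_comm]
  refine exists₂_congr fun B₁ B₂ => ?_
  rw [eq_comm, sub_eq_zero, eq_comm, ContinuousLinearMap.ext_iff]
  rfl

theorem opSet_eq_univ_of_leftInverse {B₁ : W →L[ℂ] V} {B₂ : V →L[ℂ] W}
    (h : LeftInverse B₁ B₂) : opSet V W = Set.univ :=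
  Set.eq_univ_of_forall fun X =>
    ⟨B₁, B₂ ∘L (ContinuousLinearMap.id ℂ V - X), by ext x; simp [h _]⟩

theorem opSet_eq_univ_iff_zero_mem : opSet V W = Set.univ ↔ (0 : V →L[ℂ] V) ∈ opSet V W := by
  refine ⟨fun h => h ▸ trivial, fun h => ?_⟩
  obtain ⟨B₂, B₁, hB⟩ := zero_mem_opSet_iff.1 h
  exact opSet_eq_univ_of_leftInverse hB

end OpSet

theorem opSet_eq_univ_iff_general (V : Type u) [NormedAddCommGroup V] [NormedSpace ℂ V]
    (W : Type u) [NormedAddCommGroup W] [NormedSpace ℂ W] :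
    (opSet V W = Set.univ ↔
      ∃ N : Submodule ℂ W, N.ClosedComplemented ∧ Nonempty (V ≃L[ℂ] N)) ∧
    (opSet V W = Set.univ ↔ (0 : V →L[ℂ] V) ∈ opSet V W) :=
  ⟨opSet_eq_univ_iff_zero_mem.trans <| zero_mem_opSet_iff.trans
    ContinuousLinearMap.exists_leftInverse_iff_exists_closedComplemented_equiv,
    opSet_eq_univ_iff_zero_mem⟩

/-- `K = B(V)` iff `V` is isomorphic to a complemented subspace of `W`;
moreover `K = B(V)` iff `0 ∈ K`. -/
theorem opSet_eq_univ_iff (V : Type u) [NormedAddCommGroup V] [NormedSpace ℂ V] [CompleteSpace V]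
    (W : Type u) [NormedAddCommGroup W] [NormedSpace ℂ W] [CompleteSpace W] :
    (opSet V W = Set.univ ↔
      ∃ N : Submodule ℂ W, N.ClosedComplemented ∧ Nonempty (V ≃L[ℂ] N)) ∧
    (opSet V W = Set.univ ↔ (0 : V →L[ℂ] V) ∈ opSet V W) :=
  opSet_eq_univ_iff_general V W
end

section
/- Let U ∈ B(X) and V ∈ B(Y) be relatively regular Banach space operators (complemented kernels, closed complemented ranges). If ker U ≅ ker V and coker U ≅ coker V (complements of the ranges are isomorphic), then U and V are equivalent after extension: there exist Banach spaces X₀, Y₀ and invertible operators E : Y ⊕ Y₀ → X ⊕ X₀ and F : X ⊕ X₀ → Y ⊕ Y₀ such that diag(U, I_{X₀}) = E · diag(V, I_{Y₀}) · F. -/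
/-!
Choose closed complements `X = ker U ⊕ X₁` and `X = ran U ⊕ Xc`. By the open mapping theorem
`U` restricts to an isomorphism `X₁ ≃ ran U`, so `U` is equivalent to `0 ⊕ I_{X₁}`, where
`0 : ker U → Xc`; likewise `V` is equivalent to `0 ⊕ I_{Y₁}` with `0 : ker V → Yc`.
Up to reordering summands, `U ⊕ I_{Y₁}` and `V ⊕ I_{X₁}` are then both equivalent to
`0 ⊕ I_{X₁ × Y₁}`: the two zero maps are equivalent because the kernels and the cokernels are
isomorphic.
-/

namespace ContinuousLinearMap

section Equivalence

variable {R : Type*} [Semiring R]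
  {M₁ M₂ M₃ M₄ N₁ N₂ N₃ N₄ : Type*}
  [TopologicalSpace M₁] [AddCommMonoid M₁] [Module R M₁]
  [TopologicalSpace M₂] [AddCommMonoid M₂] [Module R M₂]
  [TopologicalSpace M₃] [AddCommMonoid M₃] [Module R M₃]
  [TopologicalSpace M₄] [AddCommMonoid M₄] [Module R M₄]
  [TopologicalSpace N₁] [AddCommMonoid N₁] [Module R N₁]
  [TopologicalSpace N₂] [AddCommMonoid N₂] [Module R N₂]
  [TopologicalSpace N₃] [AddCommMonoid N₃] [Module R N₃]
  [TopologicalSpace N₄] [AddCommMonoid N₄] [Module R N₄]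

def Equivalent (A : M₁ →L[R] M₂) (B : N₁ →L[R] N₂) : Prop :=
  ∃ (E : N₂ ≃L[R] M₂) (F : M₁ ≃L[R] N₁), A = (E : N₂ →L[R] M₂) ∘L B ∘L (F : M₁ →L[R] N₁)

namespace Equivalent

theorem refl (A : M₁ →L[R] M₂) : Equivalent A A :=
  ⟨.refl R M₂, .refl R M₁, rfl⟩

theorem symm {A : M₁ →L[R] M₂} {B : N₁ →L[R] N₂} : Equivalent A B → Equivalent B A := by
  rintro ⟨E, F, rfl⟩
  refine ⟨E.symm, F.symm, ?_⟩
  ext x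
  simp

theorem trans {A : M₁ →L[R] M₂} {B : N₁ →L[R] N₂} {C : M₃ →L[R] M₄} :
    Equivalent A B → Equivalent B C → Equivalent A C := by
  rintro ⟨E, F, rfl⟩ ⟨E', F', rfl⟩
  exact ⟨E'.trans E, F.trans F', rfl⟩

instance : @Trans (M₁ →L[R] M₂) (N₁ →L[R] N₂) (M₃ →L[R] M₄) Equivalent Equivalent Equivalent :=
  ⟨trans⟩

theorem prodMap {A : M₁ →L[R] M₂} {B : N₁ →L[R] N₂} {A' : M₃ →L[R] M₄} {B' : N₃ →L[R] N₄} :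
    Equivalent A B → Equivalent A' B' → Equivalent (A.prodMap A') (B.prodMap B') := by
  rintro ⟨E, F, rfl⟩ ⟨E', F', rfl⟩
  exact ⟨E.prodCongr E', F.prodCongr F', rfl⟩

end Equivalent

theorem equivalent_prodMap_comm (A : M₁ →L[R] M₂) (B : N₁ →L[R] N₂) :
    Equivalent (A.prodMap B) (B.prodMap A) :=
  ⟨.prodComm R N₂ M₂, .prodComm R M₁ N₁, rfl⟩

theorem equivalent_prodMap_assoc (A : M₁ →L[R] M₂) (B : N₁ →L[R] N₂) (C : M₃ →L[R] M₄) :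
    Equivalent ((A.prodMap B).prodMap C) (A.prodMap (B.prodMap C)) :=
  ⟨(ContinuousLinearEquiv.prodAssoc R M₂ N₂ M₄).symm, .prodAssoc R M₁ N₁ M₃, rfl⟩

theorem equivalent_zero (e : M₁ ≃L[R] N₁) (e' : M₂ ≃L[R] N₂) :
    Equivalent (0 : M₁ →L[R] M₂) (0 : N₁ →L[R] N₂) :=
  ⟨e'.symm, e, by simp⟩

end Equivalence

section NormalForm

variable {R : Type*} [Ring R] {M N : Type*}
  [TopologicalSpace M] [AddCommGroup M] [IsTopologicalAddGroup M] [Module R M]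
  [TopologicalSpace N] [AddCommGroup N] [IsTopologicalAddGroup N] [Module R N]

theorem equivalent_zero_prodMap_id_of_isTopCompl (T : M →L[R] N) {X₁ : Submodule R M}
    {C : Submodule R N} (hX₁ : Submodule.IsTopCompl T.ker X₁) (hC : Submodule.IsTopCompl T.range C)
    (e : X₁ ≃L[R] T.range) (he : ∀ x, (e x : N) = T x) :
    Equivalent T ((0 : T.ker →L[R] C).prodMap (.id R X₁)) := by
  let dX := Submodule.prodEquivOfIsTopCompl _ _ hX₁
  refine ⟨((ContinuousLinearEquiv.prodComm R C X₁).trans (e.prodCongr (.refl R C))).trans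
    (Submodule.prodEquivOfIsTopCompl _ _ hC), dX.symm, ?_⟩
  ext x
  obtain ⟨⟨⟨k, hk⟩, x₁⟩, rfl⟩ := dX.surjective x
  simp only [comp_apply, ContinuousLinearEquiv.coe_coe, dX.symm_apply_apply]
  simpa [dX, Submodule.prodEquivOfIsTopCompl_apply, he] using hk

end NormalForm

section Banach

variable {𝕜 E F : Type*} [NontriviallyNormedField 𝕜]
  [NormedAddCommGroup E] [NormedSpace 𝕜 E] [CompleteSpace E]
  [NormedAddCommGroup F] [NormedSpace 𝕜 F] [CompleteSpace F]

theorem exists_equiv_range_of_isCompl_ker (T : E →L[𝕜] F) {X₁ : Submodule 𝕜 E}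
    (hX₁ : IsCompl T.ker X₁) (hX₁c : IsClosed (X₁ : Set E)) (hT : IsClosed (T.range : Set F)) :
    ∃ e : X₁ ≃L[𝕜] T.range, ∀ x, (e x : F) = T x := by
  have : CompleteSpace X₁ := hX₁c.completeSpace_coe
  have hrange : (T ∘L X₁.subtypeL).range = T.range := by
    change ((T : E →ₗ[𝕜] F).domRestrict X₁).range = _
    rw [LinearMap.range_domRestrict, Submodule.map_eq_range_iff]
    exact hX₁.symm.codisjoint
  have hinj : Function.Injective (T ∘L X₁.subtypeL) :=
    LinearMap.injective_domRestrict_iff.2 hX₁.symm.disjoint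
  exact ⟨((T ∘L X₁.subtypeL).equivRange hinj (by rwa [← hrange] at hT)).trans (.ofEq _ _ hrange),
    fun _ => rfl⟩

theorem equivalent_zero_prodMap_id (T : E →L[𝕜] F) {X₁ : Submodule 𝕜 E} {C : Submodule 𝕜 F}
    (hX₁ : Submodule.IsTopCompl T.ker X₁) (hC : Submodule.IsTopCompl T.range C) :
    Equivalent T ((0 : T.ker →L[𝕜] C).prodMap (.id 𝕜 X₁)) := by
  obtain ⟨e, he⟩ := exists_equiv_range_of_isCompl_ker T hX₁.isCompl hX₁.isClosed' hC.isClosed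
  exact equivalent_zero_prodMap_id_of_isTopCompl T hX₁ hC e he

end Banach

end ContinuousLinearMap

/-- Two relatively regular operators (complemented kernels and closed
complemented ranges) with isomorphic kernels and isomorphic cokernels (complements of the
ranges) are equivalent after extension. -/
theorem eae_of_relatively_regular (X : Type) [NormedAddCommGroup X] [NormedSpace ℂ X]
    [CompleteSpace X] (Y : Type) [NormedAddCommGroup Y] [NormedSpace ℂ Y] [CompleteSpace Y]
    (U : X →L[ℂ] X) (V : Y →L[ℂ] Y)
    (hUker : (LinearMap.ker (U : X →ₗ[ℂ] X)).ClosedComplemented)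
    (hUran : IsClosed (LinearMap.range (U : X →ₗ[ℂ] X) : Set X) ∧ (LinearMap.range (U : X →ₗ[ℂ] X)).ClosedComplemented)
    (hVker : (LinearMap.ker (V : Y →ₗ[ℂ] Y)).ClosedComplemented)
    (hVran : IsClosed (LinearMap.range (V : Y →ₗ[ℂ] Y) : Set Y) ∧ (LinearMap.range (V : Y →ₗ[ℂ] Y)).ClosedComplemented)
    (hker : Nonempty ((LinearMap.ker (U : X →ₗ[ℂ] X)) ≃L[ℂ] (LinearMap.ker (V : Y →ₗ[ℂ] Y))))
    (hcoker : ∃ (Xc : Submodule ℂ X) (Yc : Submodule ℂ Y),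
      IsCompl (LinearMap.range (U : X →ₗ[ℂ] X)) Xc ∧ IsCompl (LinearMap.range (V : Y →ₗ[ℂ] Y)) Yc ∧
      IsClosed (Xc : Set X) ∧ IsClosed (Yc : Set Y) ∧ Nonempty (Xc ≃L[ℂ] Yc)) :
    ∃ (X₀ : Type) (_ : NormedAddCommGroup X₀) (_ : NormedSpace ℂ X₀) (_ : CompleteSpace X₀)
      (Y₀ : Type) (_ : NormedAddCommGroup Y₀) (_ : NormedSpace ℂ Y₀) (_ : CompleteSpace Y₀)
      (E : (Y × Y₀) ≃L[ℂ] (X × X₀)) (F : (X × X₀) ≃L[ℂ] (Y × Y₀)),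
      U.prodMap (ContinuousLinearMap.id ℂ X₀) =
        ((E : (Y × Y₀) →L[ℂ] (X × X₀)).comp
          ((V.prodMap (ContinuousLinearMap.id ℂ Y₀)).comp
            (F : (X × X₀) →L[ℂ] (Y × Y₀)))) := by
  obtain ⟨X₁, hX₁⟩ := hUker.exists_isTopCompl
  obtain ⟨Y₁, hY₁⟩ := hVker.exists_isTopCompl
  obtain ⟨Xc, Yc, hXc, hYc, hXcc, hYcc, ⟨ψ⟩⟩ := hcoker
  obtain ⟨φ⟩ := hker
  have hU := U.equivalent_zero_prodMap_id hX₁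
    (Submodule.IsCompl.isTopCompl_of_isClosed hXc hUran.1 hXcc)
  have hV := V.equivalent_zero_prodMap_id hY₁
    (Submodule.IsCompl.isTopCompl_of_isClosed hYc hVran.1 hYcc)
  have key : (U.prodMap (.id ℂ Y₁)).Equivalent (V.prodMap (.id ℂ X₁)) := by
    open ContinuousLinearMap in calc
    Equivalent (U.prodMap (.id ℂ Y₁)) (((0 : U.ker →L[ℂ] Xc).prodMap (.id ℂ X₁)).prodMap (.id ℂ Y₁))
        := hU.prodMap (.refl _)
    Equivalent _ ((0 : U.ker →L[ℂ] Xc).prodMap ((ContinuousLinearMap.id ℂ X₁).prodMap (.id ℂ Y₁)))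
        := equivalent_prodMap_assoc _ _ _
    Equivalent _ ((0 : V.ker →L[ℂ] Yc).prodMap ((ContinuousLinearMap.id ℂ Y₁).prodMap (.id ℂ X₁)))
        := (equivalent_zero φ ψ).prodMap (equivalent_prodMap_comm _ _)
    Equivalent _ (((0 : V.ker →L[ℂ] Yc).prodMap (.id ℂ Y₁)).prodMap (.id ℂ X₁))
        := (equivalent_prodMap_assoc _ _ _).symm
    Equivalent _ (V.prodMap (.id ℂ X₁)) := (hV.prodMap (.refl _)).symm
  obtain ⟨E, F, hEF⟩ := key
  have := hX₁.isClosed'.completeSpace_coe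
  have := hY₁.isClosed'.completeSpace_coe
  exact ⟨Y₁, _, _, inferInstance, X₁, _, _, inferInstance, E, F, hEF⟩
end
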